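/- Let G be a strongly connected digraph with start vertex s and dominator tree D of G_s. Let x and y be vertices lying in the same tree D_r of the bridge decomposition of D, where the root r of that tree satisfies r ≠ s. If a bridge e of G_s that is not a descendant of r in D separates x and y in G, then the bridge (d(r), r) also separates x and y. -/

import Mathlib

namespace StrongConn

variable {V : Type*}

/-- `p` is a walk in the digraph `G` from `u` to `v`, recorded as the list of visited vertices. -/
def IsWalk (G : V → V → Prop) (u v : V) (p : List V) : Prop :=
  p.Chain' G ∧ p.head? = some u ∧ p.getLast? = some v

/-- The directed edge `(a,b)` occurs on the walk `p`. -/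
def EdgeOn (a b : V) (p : List V) : Prop := (a, b) ∈ p.zip p.tail

/-- `v` is reachable from `u` in `G`. -/
def Reach (G : V → V → Prop) (u v : V) : Prop := ∃ p, IsWalk G u v p

/-- `u` and `v` are strongly connected in `G`. -/
def SConn (G : V → V → Prop) (u v : V) : Prop := Reach G u v ∧ Reach G v u

def StronglyConnected (G : V → V → Prop) : Prop := ∀ u v, Reach G u v

/-- `G` with the edge `(a,b)` deleted. -/
def DelEdge (G : V → V → Prop) (a b : V) : V → V → Prop :=
  fun x y => G x y ∧ ¬(x = a ∧ y = b)

/-- `G` with the vertex `u` (and all incident edges) deleted. -/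
def DelVertex (G : V → V → Prop) (u : V) : V → V → Prop :=
  fun x y => G x y ∧ x ≠ u ∧ y ≠ u

/-- `C` is a strongly connected component of `G`. -/
def IsSCC (G : V → V → Prop) (C : Set V) : Prop :=
  C.Nonempty ∧ (∀ x ∈ C, ∀ y ∈ C, SConn G x y) ∧ ∀ x ∈ C, ∀ y, SConn G x y → y ∈ C

/-- `(a,b)` is a strong bridge: an edge whose removal increases the number of
strongly connected components, i.e. it separates some strongly connected pair. -/
def IsStrongBridge (G : V → V → Prop) (a b : V) : Prop :=
  G a b ∧ ∃ x y, SConn G x y ∧ ¬ SConn (DelEdge G a b) x y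

/-- `u` is a strong articulation point: removing it increases the number of strongly
connected components, i.e. it separates some strongly connected pair of other vertices. -/
def IsStrongArticulationPoint (G : V → V → Prop) (u : V) : Prop :=
  ∃ x y, x ≠ u ∧ y ≠ u ∧ SConn G x y ∧ ¬ SConn (DelVertex G u) x y

/-- The reverse digraph. -/
def Rev (G : V → V → Prop) : V → V → Prop := fun x y => G y x

/-- `u` dominates `v` in the flow graph `G_s`; equivalently, `u` is an ancestor of `v`
(and `v` a descendant of `u`) in the dominator tree of `G_s`. -/
def Dom (G : V → V → Prop) (s u v : V) : Prop :=
  ∀ p, IsWalk G s v p → u ∈ p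

/-- `u` is the immediate dominator of `v` in `G_s` (the parent of `v` in the dominator tree). -/
def Idom (G : V → V → Prop) (s u v : V) : Prop :=
  u ≠ v ∧ Dom G s u v ∧ ∀ w, w ≠ v → Dom G s w v → Dom G s w u

/-- Edge `(a,b)` is a bridge of the flow graph `G_s`: every walk from `s` to `b` uses it. -/
def IsBridge (G : V → V → Prop) (s a b : V) : Prop :=
  G a b ∧ ∀ p, IsWalk G s b p → EdgeOn a b p

/-- `r` is the head of some bridge of `G_s`, i.e. a non-`s` root in the bridge
decomposition of the dominator tree. -/
def IsBridgeHead (G : V → V → Prop) (s r : V) : Prop :=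
  ∃ a, IsBridge G s a r

/-- `r` is the root of the tree containing `x` in the bridge decomposition of the
dominator tree of `G_s`: `r` dominates `x`, `r` is `s` or a bridge head, and every
bridge head dominating `x` dominates `r`. -/
def IsBDRoot (G : V → V → Prop) (s r x : V) : Prop :=
  Dom G s r x ∧ (r = s ∨ IsBridgeHead G s r) ∧
    ∀ z, Dom G s z x → IsBridgeHead G s z → Dom G s z r

/-- A depth-first search tree of `G` rooted at `s`, given by a parent function and a
preorder numbering. -/
structure DFSTree (G : V → V → Prop) (s : V) where
  parent : V → V
  pre : V → ℕ
  parent_root : parent s = s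
  parent_edge : ∀ v, v ≠ s → G (parent v) v
  root_reach : ∀ v, ∃ n, parent^[n] v = s
  pre_inj : Function.Injective pre
  pre_parent : ∀ v, v ≠ s → pre (parent v) < pre v
  /-- Descendants of a vertex form a contiguous interval in preorder. -/
  interval : ∀ u v w, (∃ n, parent^[n] w = u) → pre u ≤ pre v → pre v ≤ pre w →
      ∃ n, parent^[n] v = u
  /-- The defining property of depth-first search trees: every edge going forward
  in preorder goes to a descendant. -/
  dfs_edge : ∀ u v, G u v → pre u < pre v → ∃ n, parent^[n] v = u

/-- `u` is an ancestor of `v` in the tree `T` (every vertex is an ancestor of itself). -/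
def DFSTree.Anc {G : V → V → Prop} {s : V} (T : DFSTree G s) (u v : V) : Prop :=
  ∃ n, T.parent^[n] v = u

/-- `x ∈ loop(u)` with respect to the tree-ancestor relation `tanc`: `x` is a descendant
of `u` and there is a walk from `x` to `u` using only descendants of `u`. -/
def InLoop (G : V → V → Prop) (tanc : V → V → Prop) (u x : V) : Prop :=
  tanc u x ∧ ∃ p, IsWalk G x u p ∧ ∀ y ∈ p, tanc u y

/-- `hp` is the parent function of the loop nesting tree of `G_s` with respect to the
DFS-tree ancestor relation `tanc`: `hp x` is the nearest proper ancestor `u` of `x`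
in the DFS tree with `x ∈ loop(u)`. -/
def IsLoopParent (G : V → V → Prop) (s : V) (tanc : V → V → Prop) (hp : V → V) : Prop :=
  hp s = s ∧ ∀ x, x ≠ s →
    (tanc (hp x) x ∧ hp x ≠ x ∧ InLoop G tanc (hp x) x ∧
      ∀ u, tanc u x → u ≠ x → InLoop G tanc u x → tanc u (hp x))

/-- `u` is an ancestor of `v` in the loop nesting tree with parent function `hp`. -/
def HAnc (hp : V → V) (u v : V) : Prop := ∃ n, hp^[n] v = u

/-- `w` is the nearest common ancestor of `x` and `y` in the loop nesting tree
with parent function `hp`. -/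
def HNca (hp : V → V) (x y w : V) : Prop :=
  HAnc hp w x ∧ HAnc hp w y ∧ ∀ z, HAnc hp z x → HAnc hp z y → HAnc hp z w

/-- `u` is a nontrivial dominator of `G_s`: `u ≠ s` and `u` is not a leaf of the
dominator tree (it properly dominates some vertex). -/
def NontrivialDom (G : V → V → Prop) (s u : V) : Prop :=
  u ≠ s ∧ ∃ w, w ≠ u ∧ Dom G s u w

/-- `a` and `b` are siblings in the dominator tree of `G_s`. -/
def SiblingInD (G : V → V → Prop) (s a b : V) : Prop :=
  a ≠ b ∧ ∃ w, Idom G s w a ∧ Idom G s w b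

/-- Given the bridge-decomposition root function `r` and loop-nesting parent `hp`,
`z` is a boundary vertex. -/
def Boundary (s : V) (r hp : V → V) (z : V) : Prop := z = s ∨ r (hp z) ≠ r z

/-- `z` is the nearest boundary ancestor of `x` in the loop nesting tree. -/
def IsNearestBoundary (s : V) (r hp : V → V) (x z : V) : Prop :=
  HAnc hp z x ∧ Boundary s r hp z ∧
    ∀ z', HAnc hp z' x → Boundary s r hp z' → HAnc hp z' z

/-- `x` and `y` are 2-edge-connected: no single edge deletion leaves them in
different strongly connected components. -/
def TwoEdgeConnected (G : V → V → Prop) (x y : V) : Prop :=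
  ∀ a b, G a b → SConn (DelEdge G a b) x y

/-!
Since `r ≠ s` heads a bridge `(a', r)`, the tail `a'` dominates `r`, and `d(r)`, being a
dominator of `r` other than `r`, dominates its predecessor `a'`; so `a' = d(r)`.
Now let an `x`-`y` walk avoid `(d(r), r)`. If it used `(a, b)`, replacing its part up to `b`
by an `s`-`b` walk that misses `r` (there is one, as `r` does not dominate `b`) would give an
`s`-`y` walk avoiding `(d(r), r)`; but every such walk passes through `r`, since `r`
dominates `y`, and hence through the bridge `(d(r), r)`. Symmetrically for `y`-`x` walks.
-/

section Walks

variable {G : V → V → Prop} {u v w a b : V} {p l₁ l₂ : List V}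

theorem edgeOn_iff : EdgeOn a b p ↔ ∃ l₁ l₂, p = l₁ ++ a :: b :: l₂ := by
  induction p using List.twoStepInduction with
  | nil => simp [EdgeOn]
  | singleton x => simp [EdgeOn, List.cons_eq_append_iff]
  | cons_cons x y t _ ih =>
    simp only [EdgeOn, List.tail_cons, List.zip_cons_cons, List.mem_cons, Prod.mk.injEq] at ih ⊢
    rw [ih]
    constructor
    · rintro (⟨rfl, rfl⟩ | ⟨l₁, l₂, h⟩)
      · exact ⟨[], t, rfl⟩
      · exact ⟨x :: l₁, l₂, by simp [h]⟩
    · rintro ⟨_ | ⟨z, l₁⟩, l₂, h⟩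
      · simp_all
      · simp only [List.cons_append, List.cons.injEq] at h
        exact Or.inr ⟨l₁, l₂, h.2⟩

theorem EdgeOn.fst_mem_dropLast (h : EdgeOn a b p) : a ∈ p.dropLast := by
  obtain ⟨l₁, l₂, rfl⟩ := edgeOn_iff.mp h
  rw [show l₁ ++ a :: b :: l₂ = (l₁ ++ [a]) ++ b :: l₂ by simp,
    List.dropLast_append_of_ne_nil (List.cons_ne_nil _ _)]
  simp

theorem EdgeOn.snd_mem (h : EdgeOn a b p) : b ∈ p := by
  obtain ⟨l₁, l₂, rfl⟩ := edgeOn_iff.mp h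
  simp

theorem EdgeOn.append_right (h : EdgeOn a b p) (q : List V) : EdgeOn a b (p ++ q) := by
  obtain ⟨l₁, l₂, rfl⟩ := edgeOn_iff.mp h
  exact edgeOn_iff.mpr ⟨l₁, l₂ ++ q, by simp⟩

theorem isWalk_delEdge_iff :
    IsWalk (DelEdge G a b) u v p ↔ IsWalk G u v p ∧ ¬ EdgeOn a b p := by
  change List.IsChain _ p ∧ _ ↔ (List.IsChain _ p ∧ _) ∧ _
  simp only [List.isChain_iff_forall_rel_of_append_cons_cons, DelEdge, edgeOn_iff]
  grind

theorem IsWalk.prefix (h : IsWalk G u v (l₁ ++ w :: l₂)) : IsWalk G u w (l₁ ++ [w]) := by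
  obtain ⟨hc, hh, -⟩ := h
  refine ⟨hc.prefix ⟨l₂, by simp⟩, ?_, List.getLast?_concat⟩
  cases l₁ <;> simpa using hh

theorem IsWalk.suffix (h : IsWalk G u v (l₁ ++ w :: l₂)) : IsWalk G w v (w :: l₂) := by
  obtain ⟨hc, -, hl⟩ := h
  refine ⟨hc.suffix ⟨l₁, rfl⟩, rfl, ?_⟩
  rwa [List.getLast?_append_of_ne_nil _ (List.cons_ne_nil _ _)] at hl

theorem IsWalk.append {q : List V} (hp : IsWalk G u v p) (hq : IsWalk G v w (v :: q)) :
    IsWalk G u w (p ++ q) := by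
  obtain ⟨hcp, hhp, hlp⟩ := hp
  obtain ⟨hcq, -, hlq⟩ := hq
  obtain ⟨hv, hcq⟩ := List.isChain_cons.mp hcq
  refine ⟨hcp.append hcq ?_, ?_, ?_⟩
  · simpa [hlp] using hv
  · cases p <;> simp_all
  · cases q <;> simp_all [List.getLast?_append]

theorem Reach.exists_isWalk_not_mem (h : Reach G u v) :
    ∃ l, IsWalk G u v (l ++ [v]) ∧ v ∉ l := by
  classical
  obtain ⟨p, hp⟩ := h
  obtain ⟨l₁, l₂, hv, rfl, -⟩ := List.exists_erase_eq (List.mem_of_getLast? hp.2.2)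
  exact ⟨l₁, hp.prefix, hv⟩

end Walks

section Dominators

variable {G : V → V → Prop} {s u v w y a b d r : V}

theorem Dom.reach (h : Dom G s u v) (hv : Reach G s v) : Reach G s u := by
  obtain ⟨p, hp⟩ := hv
  obtain ⟨l₁, l₂, rfl⟩ := List.append_of_mem (h p hp)
  exact ⟨_, hp.prefix⟩

theorem Dom.antisymm (huw : Dom G s u w) (hwu : Dom G s w u) (hu : Reach G s u) : u = w := by
  obtain ⟨l, hl, hul⟩ := hu.exists_isWalk_not_mem
  by_contra hne
  obtain ⟨m₁, m₂, rfl⟩ := List.append_of_mem (show w ∈ l by simpa [Ne.symm hne] using hwu _ hl)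
  have hw : IsWalk G s w (m₁ ++ [w]) :=
    (show IsWalk G s u (m₁ ++ w :: (m₂ ++ [u])) by simpa using hl).prefix
  have hum : u ∈ m₁ := by simpa [hne] using huw _ hw
  exact hul (by simp [hum])

theorem Dom.of_adj (h : Dom G s d r) (hne : d ≠ r) (hadj : G a r) : Dom G s d a := by
  intro p hp
  have hpr : IsWalk G s r (p ++ [r]) := hp.append ⟨List.isChain_pair.mpr hadj, rfl, rfl⟩
  simpa [hne] using h _ hpr

theorem IsBridge.dom (h : IsBridge G s a b) : Dom G s a b := fun p hp =>
  List.mem_of_mem_dropLast (h.2 p hp).fst_mem_dropLast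

theorem IsBridge.ne (h : IsBridge G s a b) (hb : Reach G s b) : a ≠ b := by
  rintro rfl
  obtain ⟨l, hl, hal⟩ := hb.exists_isWalk_not_mem
  exact hal (by simpa using (h.2 _ hl).fst_mem_dropLast)

theorem IsBridge.eq_of_idom (h : IsBridge G s a r) (hd : Idom G s d r) (hr : Reach G s r) :
    a = d :=
  have had : Dom G s a d := hd.2.2 a (h.ne hr) h.dom
  had.antisymm (hd.2.1.of_adj hd.1 h.1) (h.dom.reach hr)

theorem IsBridge.edgeOn_of_dom (h : IsBridge G s d r) (hy : Dom G s r y) {p : List V}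
    (hp : IsWalk G s y p) : EdgeOn d r p := by
  obtain ⟨l₁, l₂, rfl⟩ := List.append_of_mem (hy p hp)
  simpa using (h.2 _ hp.prefix).append_right l₂

end Dominators

variable {G : V → V → Prop} {s x y a b d r : V} in
theorem Reach.delEdge_of_delEdge_bridge (h : Reach (DelEdge G d r) x y)
    (hdr : IsBridge G s d r) (hy : Dom G s r y) (hb : ¬ Dom G s r b) :
    Reach (DelEdge G a b) x y := by
  obtain ⟨p, hp⟩ := h
  refine ⟨p, isWalk_delEdge_iff.mpr ⟨(isWalk_delEdge_iff.mp hp).1, fun hab => ?_⟩⟩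
  obtain ⟨l₁, l₂, rfl⟩ := edgeOn_iff.mp hab
  obtain ⟨q, hq, hrq⟩ : ∃ q, IsWalk G s b q ∧ r ∉ q := by simpa [Dom] using hb
  have hq' : IsWalk (DelEdge G d r) s b q :=
    isWalk_delEdge_iff.mpr ⟨hq, fun h => hrq h.snd_mem⟩
  have htail : IsWalk (DelEdge G d r) b y (b :: l₂) :=
    (show IsWalk (DelEdge G d r) x y ((l₁ ++ [a]) ++ b :: l₂) by simpa using hp).suffix
  obtain ⟨hw, hnot⟩ := isWalk_delEdge_iff.mp (hq'.append htail)
  exact hnot (hdr.edgeOn_of_dom hy hw)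

theorem stmt11_general (G : V → V → Prop) (hG : StronglyConnected G) (s r x y : V)
    (hrs : r ≠ s)
    (hrx : IsBDRoot G s r x) (hry : IsBDRoot G s r y)
    (a b : V) (hnd : ¬ Dom G s r b)
    (hsep : ¬ SConn (DelEdge G a b) x y)
    (dr : V) (hdr : Idom G s dr r) :
    ¬ SConn (DelEdge G dr r) x y := by
  obtain ⟨a', ha'⟩ : IsBridgeHead G s r := hrx.2.1.resolve_left hrs
  obtain rfl : a' = dr := ha'.eq_of_idom hdr (hG s r)
  exact fun ⟨hxy, hyx⟩ => hsep ⟨hxy.delEdge_of_delEdge_bridge ha' hry.1 hnd,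
    hyx.delEdge_of_delEdge_bridge ha' hrx.1 hnd⟩

/-- If `x, y` lie in the same tree of the bridge decomposition of `D`, with root
`r ≠ s`, and a bridge `(a,b)` of `G_s` that is not a descendant of `r` in `D`
separates `x` and `y`, then the bridge `(d(r), r)` also separates `x` and `y`. -/
theorem stmt11 (G : V → V → Prop) (hG : StronglyConnected G) (s r x y : V)
    (hrs : r ≠ s)
    (hrx : IsBDRoot G s r x) (hry : IsBDRoot G s r y)
    (a b : V) (hbr : IsBridge G s a b) (hnd : ¬ Dom G s r b)
    (hsep : ¬ SConn (DelEdge G a b) x y)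
    (dr : V) (hdr : Idom G s dr r) :
    ¬ SConn (DelEdge G dr r) x y :=
  stmt11_general G hG s r x y hrs hrx hry a b hnd hsep dr hdr

end StrongConn
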